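/- arXiv:1309.5658 — 2 statements merged into one kernel-verified Lean document; each statement's English description precedes it below -/
import Mathlib

section
/- There exist constants C₁, C₂ > 0 such that for every λ ≥ 0, every nonnegative f ∈ L¹([0,1], r dr), and every smooth function u : [0,1] → ℝ satisfying u'(0) = 0, u(1) = 0, u'(1) = 0, the functional J_λ admits the radial lower bound J_λ(u) ≥ (1/2)X² − C₁X³ − C₂ λ ‖f‖_{L¹(r dr)} X, where X = ( ∫₀¹ (u''(r))² r dr )^{1/2} and ‖f‖_{L¹(r dr)} = ∫₀¹ f(r) r dr. -/
/-!
Write `v = u'`, `w = u''`, so `X² = ∫₀¹ w² r dr`. As `v(1) = 0`, Cauchy–Schwarz with the weights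
`r^{-1/2}` and `r^{1/2}` gives the Hardy-type bound `v(r)² ≤ (-log r) X² ≤ 2 X² r^{-1/2}`, i.e.
`|v(r)| ≤ √2 X r^{-1/4}`. This singularity is integrable even when cubed: it bounds
`sup |u| ≤ (4/3) √2 X` (as `u(1) = 0`), hence the load term, and `∫₀¹ v³ ≥ -4 (√2 X)³`.
The quadratic part is at least `X²/2`, since `v(0) = 0` makes `v²/r` bounded.
As `(4/3) √2 ≤ 2` and `(4/6) (√2)³ ≤ 2`, the constants `C₁ = C₂ = 2` work.
-/

open MeasureTheory Set

/-- The energy functional `J_λ` of the radial Dirichlet problem. -/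
noncomputable def Jfun (lam : ℝ) (f u : ℝ → ℝ) : ℝ :=
  (1 / 2) * (∫ r in (0:ℝ)..1, ((deriv (deriv u) r) ^ 2 + (deriv u r) ^ 2 / r ^ 2) * r)
    + (1 / 6) * (∫ r in (0:ℝ)..1, (deriv u r) ^ 3)
    - lam * ∫ r in (0:ℝ)..1, f r * u r * r

theorem sq_integral_mul_le_integral_sq_mul_integral_sq {α : Type*} [MeasurableSpace α]
    {μ : Measure α} {f g : α → ℝ} (hf : Integrable (fun x => f x ^ 2) μ)
    (hg : Integrable (fun x => g x ^ 2) μ) (hfg : Integrable (fun x => f x * g x) μ) :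
    (∫ x, f x * g x ∂μ) ^ 2 ≤ (∫ x, f x ^ 2 ∂μ) * ∫ x, g x ^ 2 ∂μ := by
  have hquad : ∀ t : ℝ, 0 ≤ (∫ x, f x ^ 2 ∂μ) * (t * t) + (2 * ∫ x, f x * g x ∂μ) * t
      + ∫ x, g x ^ 2 ∂μ := by
    intro t
    have hexpand : ∫ x, (t * f x + g x) ^ 2 ∂μ
        = (∫ x, f x ^ 2 ∂μ) * (t * t) + (2 * ∫ x, f x * g x ∂μ) * t + ∫ x, g x ^ 2 ∂μ := by
      have hpt : (fun x => (t * f x + g x) ^ 2)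
          = fun x => (t * t) * f x ^ 2 + (2 * t) * (f x * g x) + g x ^ 2 := by
        funext x; ring
      have hfg' : Integrable (fun x => t * t * f x ^ 2 + 2 * t * (f x * g x)) μ :=
        (hf.const_mul _).add (hfg.const_mul _)
      rw [hpt, integral_add hfg' hg,
        integral_add (hf.const_mul _) (hfg.const_mul _), integral_const_mul, integral_const_mul]
      ring
    exact hexpand ▸ integral_nonneg fun x => sq_nonneg _
  have := discrim_le_zero hquad
  rw [discrim] at this
  nlinarith

open intervalIntegral

theorem sq_le_neg_log_mul_integral_sq_deriv_mul {v : ℝ → ℝ} (hv : ContDiff ℝ 1 v) (hv1 : v 1 = 0)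
    {r : ℝ} (hr : r ∈ Ioc 0 1) :
    v r ^ 2 ≤ -Real.log r * ∫ s in (0:ℝ)..1, deriv v s ^ 2 * s := by
  obtain ⟨hr0, hr1⟩ := hr
  have hw : Continuous (deriv v) := hv.continuous_deriv le_rfl
  have hsqrt : ∀ s ∈ Icc r 1, 0 < √s := fun s hs => Real.sqrt_pos.2 (hr0.trans_le hs.1)
  have hf : ContinuousOn (fun s => (√s)⁻¹) (Icc r 1) :=
    continuousOn_id.sqrt.inv₀ fun s hs => (hsqrt s hs).ne'
  have hg : ContinuousOn (fun s => √s * deriv v s) (Icc r 1) :=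
    continuousOn_id.sqrt.mul hw.continuousOn
  have hv_eq : v r = -∫ s in Ioc r 1, (√s)⁻¹ * (√s * deriv v s) := by
    rw [← integral_of_le hr1, integral_congr (g := deriv v) fun s hs => by
      rw [uIcc_of_le hr1] at hs
      field_simp [(hsqrt s hs).ne'],
      integral_deriv_eq_sub (fun x _ => hv.differentiable one_ne_zero x)
        (hw.intervalIntegrable _ _), hv1]
    ring
  have hcs := sq_integral_mul_le_integral_sq_mul_integral_sq (μ := volume.restrict (Ioc r 1))
    ((hf.pow 2).integrableOn_Icc.mono_set Ioc_subset_Icc_self)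
    ((hg.pow 2).integrableOn_Icc.mono_set Ioc_subset_Icc_self)
    ((hf.mul hg).integrableOn_Icc.mono_set Ioc_subset_Icc_self)
  have hlog : ∫ s in Ioc r 1, ((√s)⁻¹) ^ 2 = -Real.log r := by
    rw [← integral_of_le hr1, integral_congr (g := fun s => s⁻¹) fun s hs => by
      rw [uIcc_of_le hr1] at hs
      rw [inv_pow, Real.sq_sqrt (hr0.trans_le hs.1).le],
      integral_inv_of_pos hr0 one_pos, Real.log_div one_ne_zero hr0.ne', Real.log_one, zero_sub]
  have htail : ∫ s in Ioc r 1, (√s * deriv v s) ^ 2 ≤ ∫ s in (0:ℝ)..1, deriv v s ^ 2 * s := by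
    rw [integral_of_le zero_le_one]
    calc ∫ s in Ioc r 1, (√s * deriv v s) ^ 2 = ∫ s in Ioc r 1, deriv v s ^ 2 * s :=
          setIntegral_congr_fun measurableSet_Ioc fun s hs => by
            rw [mul_pow, Real.sq_sqrt (hr0.trans hs.1).le, mul_comm]
      _ ≤ ∫ s in Ioc 0 1, deriv v s ^ 2 * s :=
          setIntegral_mono_set (((hw.pow 2).mul continuous_id).integrableOn_Icc.mono_set
              Ioc_subset_Icc_self)
            ((ae_restrict_iff' measurableSet_Ioc).2 (ae_of_all _ fun s hs =>
              mul_nonneg (sq_nonneg _) hs.1.le))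
            (Ioc_subset_Ioc_left hr0.le).eventuallyLE
  calc v r ^ 2 ≤ (∫ s in Ioc r 1, ((√s)⁻¹) ^ 2) * ∫ s in Ioc r 1, (√s * deriv v s) ^ 2 := by
        rw [hv_eq, neg_sq]; exact hcs
    _ ≤ -Real.log r * ∫ s in (0:ℝ)..1, deriv v s ^ 2 * s := by
        rw [hlog]
        exact mul_le_mul_of_nonneg_left htail (neg_nonneg.2 (Real.log_nonpos hr0.le hr1))

theorem neg_log_le_two_mul_rpow {r : ℝ} (hr : 0 < r) : -Real.log r ≤ 2 * r ^ (-(1/2 : ℝ)) := by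
  have := Real.log_le_rpow_div (inv_nonneg.2 hr.le) (by norm_num : (0:ℝ) < 1/2)
  rw [Real.log_inv, Real.inv_rpow hr.le, ← Real.rpow_neg hr.le] at this
  linarith

theorem abs_le_sqrt_two_mul_sqrt_integral_mul_rpow {v : ℝ → ℝ} (hv : ContDiff ℝ 1 v)
    (hv1 : v 1 = 0) {r : ℝ} (hr : r ∈ Ioc 0 1) :
    |v r| ≤ √2 * √(∫ s in (0:ℝ)..1, deriv v s ^ 2 * s) * r ^ (-(1/4 : ℝ)) := by
  set I := ∫ s in (0:ℝ)..1, deriv v s ^ 2 * s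
  have hI : 0 ≤ I := intervalIntegral.integral_nonneg zero_le_one fun s hs =>
    mul_nonneg (sq_nonneg _) hs.1
  have hsq : v r ^ 2 ≤ 2 * I * r ^ (-(1/2 : ℝ)) := calc
    v r ^ 2 ≤ -Real.log r * I := sq_le_neg_log_mul_integral_sq_deriv_mul hv hv1 hr
    _ ≤ 2 * r ^ (-(1/2 : ℝ)) * I := mul_le_mul_of_nonneg_right (neg_log_le_two_mul_rpow hr.1) hI
    _ = 2 * I * r ^ (-(1/2 : ℝ)) := by ring
  have hroot : √(r ^ (-(1/2 : ℝ))) = r ^ (-(1/4 : ℝ)) := by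
    rw [Real.sqrt_eq_rpow, ← Real.rpow_mul hr.1.le]; norm_num
  calc |v r| ≤ √(2 * I * r ^ (-(1/2 : ℝ))) := Real.abs_le_sqrt hsq
    _ = √2 * √I * r ^ (-(1/4 : ℝ)) := by
      rw [Real.sqrt_mul (by positivity), Real.sqrt_mul zero_le_two, hroot]

-- The bound is only assumed on `Ioo 0 1`: in Mathlib `0 ^ (-1/4) = 0`.
theorem abs_le_of_abs_deriv_le_mul_rpow {u : ℝ → ℝ} (hu : ContDiff ℝ 1 u) (hu1 : u 1 = 0)
    {K : ℝ} (hK : ∀ s ∈ Ioo (0:ℝ) 1, |deriv u s| ≤ K * s ^ (-(1/4 : ℝ))) {r : ℝ}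
    (hr : r ∈ Icc 0 1) : |u r| ≤ 4 / 3 * K := by
  have hv : Continuous (deriv u) := hu.continuous_deriv le_rfl
  have hu_eq : u r = -∫ s in r..1, deriv u s := by
    rw [integral_deriv_eq_sub (fun x _ => hu.differentiable one_ne_zero x)
      (hv.intervalIntegrable _ _), hu1]
    ring
  calc |u r| ≤ ∫ s in r..1, |deriv u s| := by
        rw [hu_eq, abs_neg]; exact abs_integral_le_integral_abs hr.2
    _ ≤ ∫ s in (0:ℝ)..1, |deriv u s| :=
        integral_mono_interval hr.1 hr.2 le_rfl (ae_of_all _ fun s => abs_nonneg _)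
          (hv.abs.intervalIntegrable _ _)
    _ ≤ ∫ s in (0:ℝ)..1, K * s ^ (-(1/4 : ℝ)) :=
        integral_mono_on_of_le_Ioo zero_le_one (hv.abs.intervalIntegrable _ _)
          ((intervalIntegrable_rpow' (by norm_num)).const_mul K) hK
    _ = 4 / 3 * K := by
        rw [intervalIntegral.integral_const_mul, integral_rpow (Or.inl (by norm_num))]
        norm_num
        ring

theorem neg_four_mul_pow_three_le_integral_pow_three {v : ℝ → ℝ} (hv : Continuous v) {K : ℝ}
    (hK : ∀ s ∈ Ioo (0:ℝ) 1, |v s| ≤ K * s ^ (-(1/4 : ℝ))) :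
    -(4 * K ^ 3) ≤ ∫ s in (0:ℝ)..1, v s ^ 3 := by
  have hint : ∫ s in (0:ℝ)..1, -(K ^ 3 * s ^ (-(3/4) : ℝ)) = -(4 * K ^ 3) := by
    rw [intervalIntegral.integral_neg, intervalIntegral.integral_const_mul,
      integral_rpow (Or.inl (by norm_num))]
    norm_num
    ring
  rw [← hint]
  refine integral_mono_on_of_le_Ioo zero_le_one
    ((intervalIntegrable_rpow' (by norm_num)).const_mul _).neg ((hv.pow 3).intervalIntegrable _ _)
    fun s hs => ?_
  have hcube : |v s| ^ 3 ≤ K ^ 3 * s ^ (-(3/4) : ℝ) := by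
    calc |v s| ^ 3 ≤ (K * s ^ (-(1/4 : ℝ))) ^ 3 := pow_le_pow_left₀ (abs_nonneg _) (hK s hs) 3
      _ = K ^ 3 * s ^ (-(3/4) : ℝ) := by
        rw [mul_pow, ← Real.rpow_natCast (s ^ _) 3, ← Real.rpow_mul hs.1.le]; norm_num
  have := neg_abs_le (v s ^ 3)
  rw [abs_pow] at this
  linarith

-- Needed: the interval integral of a non-integrable `(w² + v²/r²) r` would be the junk value `0`.
theorem intervalIntegrable_sq_div_sq_mul {v : ℝ → ℝ} (hv : ContDiff ℝ 1 v) (hv0 : v 0 = 0) :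
    IntervalIntegrable (fun r => v r ^ 2 / r ^ 2 * r) volume 0 1 := by
  obtain ⟨L, hL⟩ := hv.contDiffOn.exists_lipschitzOnWith one_ne_zero (convex_Icc 0 1)
    isCompact_Icc
  rw [intervalIntegrable_iff_integrableOn_Ioc_of_le zero_le_one]
  refine Measure.integrableOn_of_bounded (M := L ^ 2) measure_Ioc_lt_top.ne
    (by have := hv.continuous.measurable; fun_prop)
    ((ae_restrict_iff' measurableSet_Ioc).2 (ae_of_all _ fun r hr => ?_))
  have hvr : |v r| ≤ L * r := by
    simpa [hv0, Real.dist_eq, abs_of_pos hr.1] using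
      hL.dist_le_mul r (Ioc_subset_Icc_self hr) 0 (left_mem_Icc.2 zero_le_one)
  have hsq : v r ^ 2 ≤ L ^ 2 * r ^ 2 := by
    rw [← sq_abs, ← mul_pow]; exact pow_le_pow_left₀ (abs_nonneg _) hvr 2
  rw [Real.norm_of_nonneg (by have := hr.1; positivity), div_mul_eq_mul_div,
    div_le_iff₀ (by have := hr.1; positivity)]
  nlinarith [hr.1, hr.2, sq_nonneg r, sq_nonneg L]

theorem integral_sq_mul_le_integral_add_sq_div_sq_mul {v w : ℝ → ℝ} (hv : ContDiff ℝ 1 v)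
    (hv0 : v 0 = 0) (hw : Continuous w) :
    ∫ r in (0:ℝ)..1, w r ^ 2 * r ≤ ∫ r in (0:ℝ)..1, (w r ^ 2 + v r ^ 2 / r ^ 2) * r := by
  have hsplit : (fun r => (w r ^ 2 + v r ^ 2 / r ^ 2) * r)
      = fun r => w r ^ 2 * r + v r ^ 2 / r ^ 2 * r := by
    funext r; ring
  have hw2 : IntervalIntegrable (fun r => w r ^ 2 * r) volume 0 1 :=
    ((hw.pow 2).mul continuous_id).intervalIntegrable _ _
  rw [hsplit]
  exact integral_mono_on zero_le_one hw2 (hw2.add (intervalIntegrable_sq_div_sq_mul hv hv0))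
    fun r hr => le_add_of_nonneg_right (by have := hr.1; positivity)

theorem integral_mul_le_mul_integral {a b B : ℝ} (hab : a ≤ b) {g u : ℝ → ℝ}
    (hg0 : ∀ x ∈ Icc a b, 0 ≤ g x) (hg : IntegrableOn g (Ioc a b))
    (hu : ContinuousOn u (Icc a b)) (huB : ∀ x ∈ Icc a b, u x ≤ B) :
    ∫ x in a..b, g x * u x ≤ B * ∫ x in a..b, g x := by
  rw [← integrableOn_Icc_iff_integrableOn_Ioc] at hg
  rw [← intervalIntegral.integral_const_mul]
  refine integral_mono_on hab ((intervalIntegrable_iff_integrableOn_Icc_of_le hab).2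
    (hg.mul_continuousOn hu isCompact_Icc))
    ((intervalIntegrable_iff_integrableOn_Icc_of_le hab).2 (hg.const_mul B)) fun x hx => ?_
  rw [mul_comm B]
  exact mul_le_mul_of_nonneg_left (huB x hx) (hg0 x hx)

/-- Radial lower bound for the functional `J_λ` in terms of `X = ‖u''‖_{L²(r dr)}`. -/
theorem stmt5 :
    ∃ C₁ > (0:ℝ), ∃ C₂ > (0:ℝ), ∀ lam : ℝ, 0 ≤ lam → ∀ f : ℝ → ℝ,
      (∀ r ∈ Icc (0:ℝ) 1, 0 ≤ f r) →
      IntegrableOn (fun r => f r * r) (Ioc 0 1) volume →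
      ∀ u : ℝ → ℝ, ContDiff ℝ (⊤ : ℕ∞) u →
        deriv u 0 = 0 → u 1 = 0 → deriv u 1 = 0 →
        ∀ X : ℝ, X = Real.sqrt (∫ r in (0:ℝ)..1, (deriv (deriv u) r) ^ 2 * r) →
          (1 / 2) * X ^ 2 - C₁ * X ^ 3 - C₂ * lam * (∫ r in (0:ℝ)..1, f r * r) * X
            ≤ Jfun lam f u := by
  refine ⟨2, two_pos, 2, two_pos, fun lam hlam f hf hfint u hu hu'0 hu1 hu'1 X hX => ?_⟩
  have hu2 : ContDiff ℝ 2 u := hu.of_le (WithTop.coe_le_coe.2 le_top)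
  have hv : ContDiff ℝ 1 (deriv u) := hu2.deriv'
  have hX0 : 0 ≤ X := hX ▸ Real.sqrt_nonneg _
  have hX2 : X ^ 2 = ∫ r in (0:ℝ)..1, deriv (deriv u) r ^ 2 * r := by
    rw [hX, Real.sq_sqrt (integral_nonneg zero_le_one fun r hr => mul_nonneg (sq_nonneg _) hr.1)]
  set K := √2 * X
  have hsqrt2 : √2 ≤ 3 / 2 := Real.sqrt_le_iff.2 ⟨by norm_num, by norm_num⟩
  have hK : K ≤ 3 / 2 * X := mul_le_mul_of_nonneg_right hsqrt2 hX0
  have hK3 : K ^ 3 ≤ 3 * X ^ 3 := by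
    have hK3_eq : K ^ 3 = 2 * √2 * X ^ 3 := by rw [mul_pow, pow_succ, Real.sq_sqrt zero_le_two]
    rw [hK3_eq]
    nlinarith [pow_nonneg hX0 3]
  have hvK : ∀ s ∈ Ioo (0:ℝ) 1, |deriv u s| ≤ K * s ^ (-(1/4 : ℝ)) := fun s hs => by
    have := abs_le_sqrt_two_mul_sqrt_integral_mul_rpow hv hu'1 (Ioo_subset_Ioc_self hs)
    rwa [← hX] at this
  have hquad := integral_sq_mul_le_integral_add_sq_div_sq_mul hv hu'0 (hv.continuous_deriv le_rfl)
  have hcubic := neg_four_mul_pow_three_le_integral_pow_three hv.continuous hvK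
  have hF : 0 ≤ ∫ r in (0:ℝ)..1, f r * r :=
    integral_nonneg zero_le_one fun r hr => mul_nonneg (hf r hr) hr.1
  have hload : ∫ r in (0:ℝ)..1, f r * u r * r ≤ 4 / 3 * K * ∫ r in (0:ℝ)..1, f r * r := by
    rw [integral_congr fun r _ => mul_right_comm (f r) (u r) r]
    exact integral_mul_le_mul_integral zero_le_one (fun r hr => mul_nonneg (hf r hr) hr.1) hfint
      hu.continuous.continuousOn fun r hr =>
        (le_abs_self _).trans (abs_le_of_abs_deriv_le_mul_rpow (hu2.of_le one_le_two) hu1 hvK hr)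
  rw [Jfun]
  linarith [mul_le_mul_of_nonneg_left hload hlam,
    mul_le_mul_of_nonneg_right hK (mul_nonneg hlam hF)]
end

section
/- Let λ ≥ 0, f ∈ L¹([0,1], r dr), L ∈ ℝ, and let {uₙ} be a sequence of smooth functions on [0,1] satisfying uₙ'(0) = 0, uₙ(1) = 0, uₙ'(1) = 0, which is bounded in the norm ‖u‖ = ( ∫₀¹ [u² + (u')²/r² + (u'')²] r dr )^{1/2}, and which is a Palais–Smale sequence for J_λ at level L, meaning: J_λ(uₙ) → L, and sup { |J_λ'(uₙ)[φ]| : φ smooth with φ'(0)=0, φ(1)=0, φ'(1)=0, ‖φ‖ ≤ 1 } → 0 as n → ∞, where J_λ'(u)[φ] = ∫₀¹ [u''φ'' + u'φ'/r²] r dr + (1/2)∫₀¹ (u')²φ' dr − λ∫₀¹ fφ r dr. Then {uₙ} admits a subsequence that is Cauchy with respect to the norm u ↦ ( ∫₀¹ (u''(r) + u'(r)/r)² r dr )^{1/2}. -/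
/-!
Write `v = u'`. Boundedness in the radial `W^{2,2}` norm controls `v` in two ways: since
`v(1) = 0`, `v(r)² = -∫_r^1 2 v v'`, and `2 |v v'| ≤ v²/s + v'² s` gives `v² ≤ ‖u‖²` on
`[0, 1]`; Cauchy–Schwarz gives `(v(y) - v(x))² ≤ |y - x| ‖u‖² / δ` on `[δ, 1]`. A diagonal
argument over rational radii and this equicontinuity yield a subsequence along which `u_n'` is
pointwise Cauchy on `(0, 1]`, hence Cauchy in `L²(0, 1)` by dominated convergence.

For `w` with `w'(0) = w'(1) = 0` the cross term of `∫ (Δw)² r dr` integrates to `[w'²]₀¹ = 0`,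
so `∫ (Δw)² r dr` is the quadratic part of `J_λ`. With `w = u_m - u_n` this gives
`‖Δw‖² = J'(u_m)[w] - J'(u_n)[w] - ½ ∫ (u_m'² - u_n'²) w'`. The first two terms tend to zero
by the Palais–Smale condition, as `‖w‖` stays bounded, and the last is at most
`2 ‖v‖_∞ ∫ (u_m' - u_n')²`.
-/

open MeasureTheory Set Filter

/-- The first variation (derivative) of `J_λ` at `u` in the direction `φ`. -/
noncomputable def Jpair (lam : ℝ) (f u φ : ℝ → ℝ) : ℝ :=
  (∫ r in (0:ℝ)..1,
      (deriv (deriv u) r * deriv (deriv φ) r + deriv u r * deriv φ r / r ^ 2) * r)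
    + (1 / 2) * (∫ r in (0:ℝ)..1, (deriv u r) ^ 2 * deriv φ r)
    - lam * ∫ r in (0:ℝ)..1, f r * φ r * r

/-- The squared radial `W^{2,2}([0,1], r dr)` norm. -/
noncomputable def W22normSq (u : ℝ → ℝ) : ℝ :=
  ∫ r in (0:ℝ)..1, ((u r) ^ 2 + (deriv u r) ^ 2 / r ^ 2 + (deriv (deriv u) r) ^ 2) * r

open Topology

theorem EquicontinuousWithinAt.cauchySeq_of_mem_closure {X α : Type*} [TopologicalSpace X]
    [UniformSpace α] {F : ℕ → X → α} {S : Set X} {x : X} (hF : EquicontinuousWithinAt F S x)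
    (hx : x ∈ closure S) (hS : ∀ y ∈ S, CauchySeq (F · y)) : CauchySeq (F · x) := by
  rw [cauchySeq_iff]
  intro U hU
  obtain ⟨V, hV, hVsymm, hVU⟩ := comp_comp_symm_mem_uniformity_sets hU
  rw [mem_closure_iff_nhdsWithin_neBot] at hx
  obtain ⟨y, hyS, hy⟩ := (eventually_mem_nhdsWithin.and (hF V hV)).exists
  obtain ⟨N, hN⟩ := cauchySeq_iff.mp (hS y hyS) V hV
  exact ⟨N, fun m hm n hn => hVU ⟨_, ⟨_, hy m, hN m hm n hn⟩, SetRel.symm V (hy n)⟩⟩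

theorem Metric.equicontinuousWithinAt_of_continuity_modulus {ι β α : Type*} [TopologicalSpace β]
    [PseudoMetricSpace α] {F : ι → β → α} {S : Set β} {x₀ : β} (b : β → ℝ)
    (b_lim : Tendsto b (𝓝[S] x₀) (𝓝 0))
    (H : ∀ᶠ x in 𝓝[S] x₀, ∀ i, dist (F i x₀) (F i x) ≤ b x) :
    EquicontinuousWithinAt F S x₀ := by
  intro U hU
  obtain ⟨ε, ε0, hε⟩ := Metric.mem_uniformity_dist.mp hU
  filter_upwards [b_lim (Iio_mem_nhds ε0), H] with x hx₁ hx₂ i using hε ((hx₂ i).trans_lt hx₁)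

theorem exists_strictMono_forall_tendsto_of_isCompact {ι α : Type*} [Countable ι]
    [TopologicalSpace α] [FirstCountableTopology α] {K : ι → Set α} (hK : ∀ i, IsCompact (K i))
    {x : ℕ → ι → α} (hx : ∀ n i, x n i ∈ K i) :
    ∃ a : ι → α, ∃ φ : ℕ → ℕ, StrictMono φ ∧ ∀ i, Tendsto (fun n => x (φ n) i) atTop (𝓝 (a i)) := by
  obtain ⟨a, -, φ, hφ, hlim⟩ := (isCompact_univ_pi hK).tendsto_subseq (x := x)
    fun n => mem_univ_pi.mpr (hx n)
  exact ⟨a, φ, hφ, tendsto_pi_nhds.mp hlim⟩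

theorem tendsto_integral_sq_sub_of_cauchySeq {X : Type*} [MeasurableSpace X] {μ : Measure X}
    [IsFiniteMeasure μ] {F : ℕ → X → ℝ} {K : ℝ} (hF : ∀ n, AEStronglyMeasurable (F n) μ)
    (hK : ∀ n, ∀ᵐ x ∂μ, |F n x| ≤ K) (hC : ∀ᵐ x ∂μ, CauchySeq (F · x)) :
    Tendsto (fun p : ℕ × ℕ => ∫ x, (F p.1 x - F p.2 x) ^ 2 ∂μ) atTop (𝓝 0) := by
  have hbound : ∀ p : ℕ × ℕ, ∀ᵐ x ∂μ, ‖(F p.1 x - F p.2 x) ^ 2‖ ≤ (2 * K) ^ 2 := by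
    intro p
    filter_upwards [hK p.1, hK p.2] with x h₁ h₂
    rw [Real.norm_eq_abs, abs_of_nonneg (sq_nonneg _)]
    obtain ⟨h₁l, h₁r⟩ := abs_le.mp h₁
    obtain ⟨h₂l, h₂r⟩ := abs_le.mp h₂
    nlinarith
  have hlim : ∀ᵐ x ∂μ, Tendsto (fun p : ℕ × ℕ => (F p.1 x - F p.2 x) ^ 2) atTop (𝓝 0) := by
    filter_upwards [hC] with x hx
    simpa [Real.dist_eq, sq_abs] using (cauchySeq_iff_tendsto_dist_atTop_0.mp hx).pow 2
  have hmeas : ∀ p : ℕ × ℕ, AEStronglyMeasurable (fun x => (F p.1 x - F p.2 x) ^ 2) μ :=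
    fun p => ((hF p.1).sub (hF p.2)).pow 2
  simpa using tendsto_integral_filter_of_dominated_convergence (f := fun _ => 0)
    (fun _ => (2 * K) ^ 2) (.of_forall hmeas) (.of_forall hbound) (integrable_const _) hlim

theorem sq_integral_le_measureReal_mul_integral_sq {X : Type*} [MeasurableSpace X]
    {μ : Measure X} [IsFiniteMeasure μ] {f : X → ℝ} (hf : Integrable f μ)
    (hf2 : Integrable (fun x => f x ^ 2) μ) :
    (∫ x, f x ∂μ) ^ 2 ≤ μ.real univ * ∫ x, f x ^ 2 ∂μ := by
  have hquad : ∀ t : ℝ, 0 ≤ μ.real univ * (t * t) + (-2 * ∫ x, f x ∂μ) * t + ∫ x, f x ^ 2 ∂μ := by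
    intro t
    have hexp : ∫ x, (f x - t) ^ 2 ∂μ
        = μ.real univ * (t * t) + (-2 * ∫ x, f x ∂μ) * t + ∫ x, f x ^ 2 ∂μ := by
      have : (fun x => (f x - t) ^ 2) = fun x => f x ^ 2 + ((-2 * t) * f x + t * t) := by
        ext x; ring
      have hlin : Integrable (fun x => -2 * t * f x + t * t) μ :=
        (hf.const_mul _).add (integrable_const _)
      rw [this, integral_add hf2 hlin,
        integral_add (hf.const_mul _) (integrable_const _), integral_const_mul, integral_const,
        smul_eq_mul]
      ring
    exact hexp ▸ integral_nonneg fun x => sq_nonneg _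
  have := discrim_le_zero hquad
  rw [discrim] at this
  linarith

theorem intervalIntegrable_mul_div_self {v V : ℝ → ℝ} (hv : Continuous v)
    (hV : Differentiable ℝ V) (hV0 : V 0 = 0) (b : ℝ) :
    IntervalIntegrable (fun r => v r * V r / r) volume 0 b := by
  have hslope : Continuous (dslope V 0) := continuous_iff_continuousAt.mpr fun x => by
    rcases eq_or_ne x 0 with rfl | hx
    · exact continuousAt_dslope_same.mpr (hV 0)
    · exact (continuousAt_dslope_of_ne hx).mpr hV.continuous.continuousAt
  refine (hv.mul hslope).intervalIntegrable 0 b |>.congr_uIoo fun r hr => ?_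
  have hr0 : r ≠ 0 := by
    rintro rfl
    simp [uIoo] at hr
    linarith
  simp [dslope_of_ne _ hr0, slope_def_field, hV0, mul_div_assoc]

theorem ContDiff.deriv_sub {n : WithTop ℕ∞} {p q : ℝ → ℝ} (hp : ContDiff ℝ n p)
    (hq : ContDiff ℝ n q) (hn : n ≠ 0) :
    deriv (fun r => p r - q r) = fun r => deriv p r - deriv q r :=
  funext fun r => deriv_fun_sub (hp.differentiable hn r) (hq.differentiable hn r)

noncomputable def W22density (u : ℝ → ℝ) (r : ℝ) : ℝ :=
  (u r ^ 2 + deriv u r ^ 2 / r ^ 2 + deriv (deriv u) r ^ 2) * r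

section W22

variable {u : ℝ → ℝ}

theorem W22density_nonneg (u : ℝ → ℝ) {r : ℝ} (hr : 0 ≤ r) : 0 ≤ W22density u r :=
  mul_nonneg (by positivity) hr

theorem intervalIntegrable_W22density (hu : ContDiff ℝ 2 u) (hu0 : deriv u 0 = 0) (a b : ℝ) :
    IntervalIntegrable (W22density u) volume a b := by
  have hv : ContDiff ℝ 1 (deriv u) := hu.deriv'
  have hsplit : W22density u
      = fun r => u r ^ 2 * r + deriv u r * deriv u r / r + deriv (deriv u) r ^ 2 * r := by
    ext r
    rcases eq_or_ne r 0 with rfl | hr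
    · simp [W22density]
    · simp only [W22density]; field_simp
  have hint : ∀ b, IntervalIntegrable (W22density u) volume 0 b := fun b => by
    rw [hsplit]
    exact (((hu.continuous.pow 2).mul continuous_id).intervalIntegrable 0 b).add
      (intervalIntegrable_mul_div_self hv.continuous (hv.differentiable one_ne_zero) hu0 b) |>.add
      (((hv.continuous_deriv le_rfl).pow 2).mul continuous_id |>.intervalIntegrable 0 b)
  exact (hint a).symm.trans (hint b)

theorem integral_W22density_le (hu : ContDiff ℝ 2 u) (hu0 : deriv u 0 = 0) {x y : ℝ}
    (hx : 0 ≤ x) (hxy : x ≤ y) (hy : y ≤ 1) :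
    ∫ r in x..y, W22density u r ≤ W22normSq u :=
  intervalIntegral.integral_mono_interval hx hxy hy
    ((ae_restrict_mem measurableSet_Ioc).mono fun _ hr => W22density_nonneg u hr.1.le)
    (intervalIntegrable_W22density hu hu0 0 1)

theorem two_mul_abs_deriv_mul_le_W22density (u : ℝ → ℝ) {r : ℝ} (hr : 0 < r) :
    2 * |deriv u r * deriv (deriv u) r| ≤ W22density u r := by
  set v := deriv u r
  set a := deriv (deriv u) r
  have hamgm : 2 * |v * a| * r ≤ v ^ 2 + (a * r) ^ 2 := by
    simpa [abs_mul, abs_of_pos hr, mul_pow, sq_abs, mul_assoc] using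
      two_mul_le_add_sq |v| (|a| * r)
  have hdens : W22density u r * r = u r ^ 2 * r ^ 2 + v ^ 2 + (a * r) ^ 2 := by
    simp only [W22density, v, a]; field_simp
  nlinarith [sq_nonneg (u r), sq_nonneg r]

theorem sq_deriv_le_W22normSq (hu : ContDiff ℝ 2 u) (hu0 : deriv u 0 = 0)
    (hu1 : deriv u 1 = 0) {r : ℝ} (hr : r ∈ Icc (0:ℝ) 1) : deriv u r ^ 2 ≤ W22normSq u := by
  have hv : ContDiff ℝ 1 (deriv u) := hu.deriv'
  have hcross : Continuous fun s => 2 * (deriv u s * deriv (deriv u) s) :=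
    continuous_const.mul (hv.continuous.mul (hv.continuous_deriv le_rfl))
  have hftc : ∫ s in r..1, 2 * (deriv u s * deriv (deriv u) s) = -deriv u r ^ 2 := by
    rw [intervalIntegral.integral_eq_sub_of_hasDerivAt (f := fun s => deriv u s ^ 2)
      (fun s _ => by
        have := (hv.differentiable one_ne_zero s).hasDerivAt.fun_pow 2
        simpa only [Nat.cast_ofNat, Nat.add_one_sub_one, pow_one, mul_assoc] using this)
      (hcross.intervalIntegrable r 1), hu1]
    ring
  calc deriv u r ^ 2 = -∫ s in r..1, 2 * (deriv u s * deriv (deriv u) s) := by rw [hftc, neg_neg]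
    _ ≤ ∫ s in r..1, |2 * (deriv u s * deriv (deriv u) s)| :=
      (neg_le_abs _).trans (intervalIntegral.abs_integral_le_integral_abs hr.2)
    _ ≤ ∫ s in r..1, W22density u s := by
      refine intervalIntegral.integral_mono_on_of_le_Ioo hr.2 (hcross.abs.intervalIntegrable r 1)
        (intervalIntegrable_W22density hu hu0 r 1) fun s hs => ?_
      rw [abs_mul, abs_two]
      exact two_mul_abs_deriv_mul_le_W22density u (hr.1.trans_lt hs.1)
    _ ≤ W22normSq u := integral_W22density_le hu hu0 hr.1 hr.2 le_rfl

theorem abs_deriv_le_sqrt (hu : ContDiff ℝ 2 u) (hu0 : deriv u 0 = 0) (hu1 : deriv u 1 = 0)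
    {B : ℝ} (hB : W22normSq u ≤ B) {r : ℝ} (hr : r ∈ Icc (0:ℝ) 1) : |deriv u r| ≤ √B :=
  Real.abs_le_sqrt ((sq_deriv_le_W22normSq hu hu0 hu1 hr).trans hB)

theorem sq_deriv_sub_le (hu : ContDiff ℝ 2 u) (hu0 : deriv u 0 = 0) {δ x y : ℝ} (hδ : 0 < δ)
    (hx : x ∈ Icc δ 1) (hy : y ∈ Icc δ 1) :
    (deriv u y - deriv u x) ^ 2 ≤ |y - x| / δ * W22normSq u := by
  wlog hxy : x ≤ y generalizing x y
  · calc (deriv u y - deriv u x) ^ 2 = (deriv u x - deriv u y) ^ 2 := by ring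
      _ ≤ |x - y| / δ * W22normSq u := this hy hx (le_of_not_ge hxy)
      _ = |y - x| / δ * W22normSq u := by rw [abs_sub_comm]
  have hv : ContDiff ℝ 1 (deriv u) := hu.deriv'
  have ha : Continuous (deriv (deriv u)) := hv.continuous_deriv le_rfl
  have hftc : ∫ s in Ioc x y, deriv (deriv u) s = deriv u y - deriv u x := by
    rw [← intervalIntegral.integral_of_le hxy, intervalIntegral.integral_eq_sub_of_hasDerivAt
      (fun s _ => (hv.differentiable one_ne_zero s).hasDerivAt) (ha.intervalIntegrable x y)]
  have hcs := sq_integral_le_measureReal_mul_integral_sq (μ := volume.restrict (Ioc x y))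
    (ha.integrableOn_Icc.mono_set Ioc_subset_Icc_self)
    ((ha.pow 2).integrableOn_Icc.mono_set Ioc_subset_Icc_self)
  rw [hftc, measureReal_restrict_apply_univ, Real.volume_real_Ioc_of_le hxy] at hcs
  -- on `[δ, 1]` the weight `r` of the norm is at least `δ`
  have hweight : ∫ s in Ioc x y, deriv (deriv u) s ^ 2 ≤ (∫ s in x..y, W22density u s) / δ := by
    rw [intervalIntegral.integral_of_le hxy, ← integral_div]
    refine setIntegral_mono_on ((ha.pow 2).integrableOn_Icc.mono_set Ioc_subset_Icc_self)
      ((intervalIntegrable_W22density hu hu0 x y).1.div_const δ) measurableSet_Ioc fun s hs => ?_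
    have hs0 : 0 < s := hδ.trans_le (hx.1.trans hs.1.le)
    rw [le_div_iff₀ hδ, W22density]
    nlinarith [sq_nonneg (deriv (deriv u) s), mul_le_mul_of_nonneg_left (hx.1.trans hs.1.le)
      (sq_nonneg (deriv (deriv u) s)), sq_nonneg (u s),
      div_nonneg (sq_nonneg (deriv u s)) (sq_nonneg s)]
  calc (deriv u y - deriv u x) ^ 2 ≤ (y - x) * ((∫ s in x..y, W22density u s) / δ) :=
        hcs.trans (mul_le_mul_of_nonneg_left hweight (sub_nonneg.mpr hxy))
    _ ≤ (y - x) * (W22normSq u / δ) := by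
        gcongr
        exact integral_W22density_le hu hu0 (hδ.le.trans hx.1) hxy hy.2
    _ = |y - x| / δ * W22normSq u := by rw [abs_of_nonneg (sub_nonneg.mpr hxy)]; ring

end W22

section Compactness

variable {u : ℕ → ℝ → ℝ} {B : ℝ}

theorem equicontinuousWithinAt_deriv (hu : ∀ n, ContDiff ℝ 2 (u n))
    (hu0 : ∀ n, deriv (u n) 0 = 0) (hB : ∀ n, W22normSq (u n) ≤ B) {x : ℝ}
    (hx : x ∈ Ioc (0:ℝ) 1) : EquicontinuousWithinAt (fun n => deriv (u n)) (Ioc 0 1) x := by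
  have hx2 : 0 < x / 2 := half_pos hx.1
  refine Metric.equicontinuousWithinAt_of_continuity_modulus
    (fun y => √(|x - y| / (x / 2) * B)) ?_ ?_
  · have hcont : Continuous fun y => √(|x - y| / (x / 2) * B) := by fun_prop
    simpa using (hcont.tendsto x).mono_left nhdsWithin_le_nhds
  · filter_upwards [inter_mem_nhdsWithin (Ioc (0:ℝ) 1) (Ioi_mem_nhds (half_lt_self hx.1))]
      with y ⟨hy, hyx⟩ n
    rw [Real.dist_eq]
    refine Real.abs_le_sqrt ?_
    calc (deriv (u n) x - deriv (u n) y) ^ 2 ≤ |x - y| / (x / 2) * W22normSq (u n) :=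
          sq_deriv_sub_le (hu n) (hu0 n) hx2 ⟨hyx.le, hy.2⟩ ⟨(half_le_self hx.1.le), hx.2⟩
      _ ≤ |x - y| / (x / 2) * B := by gcongr; exact hB n

theorem exists_strictMono_cauchySeq_deriv (hu : ∀ n, ContDiff ℝ 2 (u n))
    (hu0 : ∀ n, deriv (u n) 0 = 0) (hu1 : ∀ n, deriv (u n) 1 = 0)
    (hB : ∀ n, W22normSq (u n) ≤ B) :
    ∃ φ : ℕ → ℕ, StrictMono φ ∧ ∀ r ∈ Ioc (0:ℝ) 1, CauchySeq fun n => deriv (u (φ n)) r := by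
  set D := Ioc (0:ℝ) 1 ∩ range ((↑) : ℚ → ℝ)
  have : Countable D := ((countable_range _).mono inter_subset_right).to_subtype
  obtain ⟨_, φ, hφ, hlim⟩ := exists_strictMono_forall_tendsto_of_isCompact
    (K := fun _ : D => Icc (-√B) √B) (fun _ => isCompact_Icc)
    (x := fun n (r : D) => deriv (u n) r) fun n r =>
      abs_le.mp (abs_deriv_le_sqrt (hu n) (hu0 n) (hu1 n) (hB n) (Ioc_subset_Icc_self r.2.1))
  have hclosure : Icc (0:ℝ) 1 ⊆ closure D := by
    rw [← closure_Ioo zero_ne_one]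
    exact closure_minimal ((Rat.denseRange_cast.open_subset_closure_inter isOpen_Ioo).trans
      (closure_mono (inter_subset_inter_left _ Ioo_subset_Ioc_self))) isClosed_closure
  refine ⟨φ, hφ, fun r hr => ?_⟩
  exact ((equicontinuousWithinAt_deriv (fun n => hu (φ n)) (fun n => hu0 (φ n))
    (fun n => hB (φ n)) hr).mono inter_subset_left).cauchySeq_of_mem_closure
    (hclosure (Ioc_subset_Icc_self hr)) fun y hy => (hlim ⟨y, hy⟩).cauchySeq

theorem exists_strictMono_tendsto_integral_sq_sub_deriv (hu : ∀ n, ContDiff ℝ 2 (u n))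
    (hu0 : ∀ n, deriv (u n) 0 = 0) (hu1 : ∀ n, deriv (u n) 1 = 0)
    (hB : ∀ n, W22normSq (u n) ≤ B) :
    ∃ φ : ℕ → ℕ, StrictMono φ ∧ Tendsto (fun p : ℕ × ℕ =>
      ∫ r in (0:ℝ)..1, (deriv (u (φ p.1)) r - deriv (u (φ p.2)) r) ^ 2) atTop (𝓝 0) := by
  obtain ⟨φ, hφ, hcauchy⟩ := exists_strictMono_cauchySeq_deriv hu hu0 hu1 hB
  refine ⟨φ, hφ, ?_⟩
  simp only [intervalIntegral.integral_of_le zero_le_one]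
  exact tendsto_integral_sq_sub_of_cauchySeq
    (fun n => ((hu (φ n)).continuous_deriv one_le_two).aestronglyMeasurable)
    (fun n => (ae_restrict_mem measurableSet_Ioc).mono fun r hr =>
      abs_deriv_le_sqrt (hu (φ n)) (hu0 (φ n)) (hu1 (φ n)) (hB (φ n)) (Ioc_subset_Icc_self hr))
    ((ae_restrict_mem measurableSet_Ioc).mono hcauchy)

end Compactness

noncomputable def radialForm (p φ : ℝ → ℝ) : ℝ :=
  ∫ r in (0:ℝ)..1, (deriv (deriv p) r * deriv (deriv φ) r + deriv p r * deriv φ r / r ^ 2) * r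

section Identity

variable {p q w φ : ℝ → ℝ}

theorem Jpair_eq_radialForm (lam : ℝ) (f u φ : ℝ → ℝ) :
    Jpair lam f u φ = radialForm u φ + (1 / 2) * (∫ r in (0:ℝ)..1, deriv u r ^ 2 * deriv φ r)
      - lam * ∫ r in (0:ℝ)..1, f r * φ r * r := rfl

theorem intervalIntegrable_radialForm (hp : ContDiff ℝ 2 p) (hp0 : deriv p 0 = 0)
    (hφ : ContDiff ℝ 2 φ) :
    IntervalIntegrable (fun r => (deriv (deriv p) r * deriv (deriv φ) r
      + deriv p r * deriv φ r / r ^ 2) * r) volume 0 1 := by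
  have hp' : ContDiff ℝ 1 (deriv p) := hp.deriv'
  have hφ' : ContDiff ℝ 1 (deriv φ) := hφ.deriv'
  have hsplit : (fun r => (deriv (deriv p) r * deriv (deriv φ) r
      + deriv p r * deriv φ r / r ^ 2) * r)
      = fun r => deriv (deriv p) r * deriv (deriv φ) r * r + deriv φ r * deriv p r / r := by
    ext r
    rcases eq_or_ne r 0 with rfl | hr
    · simp
    · field_simp
  rw [hsplit]
  exact (((hp'.continuous_deriv le_rfl).mul (hφ'.continuous_deriv le_rfl)).mul continuous_id
    |>.intervalIntegrable 0 1).add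
    (intervalIntegrable_mul_div_self hφ'.continuous (hp'.differentiable one_ne_zero) hp0 1)

theorem radialForm_sub_left (hp : ContDiff ℝ 2 p) (hq : ContDiff ℝ 2 q) (hp0 : deriv p 0 = 0)
    (hq0 : deriv q 0 = 0) (hφ : ContDiff ℝ 2 φ) :
    radialForm (fun r => p r - q r) φ = radialForm p φ - radialForm q φ := by
  rw [radialForm, radialForm, radialForm, ← intervalIntegral.integral_sub
    (intervalIntegrable_radialForm hp hp0 hφ) (intervalIntegrable_radialForm hq hq0 hφ),
    hp.deriv_sub hq two_ne_zero,
    hp.deriv'.deriv_sub hq.deriv' one_ne_zero]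
  congr 1
  ext r
  ring

theorem integral_sq_radialLaplacian (hw : ContDiff ℝ 2 w) (hw0 : deriv w 0 = 0)
    (hw1 : deriv w 1 = 0) :
    ∫ r in (0:ℝ)..1, (deriv (deriv w) r + deriv w r / r) ^ 2 * r = radialForm w w := by
  have hv : ContDiff ℝ 1 (deriv w) := hw.deriv'
  have ha : Continuous (deriv (deriv w)) := hv.continuous_deriv le_rfl
  have hv' : Continuous (deriv w) := hv.continuous
  have hcont : Continuous fun r => 2 * (deriv w r * deriv (deriv w) r) := by fun_prop
  have hcross : ∫ r in (0:ℝ)..1, 2 * (deriv w r * deriv (deriv w) r) = 0 := by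
    rw [intervalIntegral.integral_eq_sub_of_hasDerivAt (f := fun s => deriv w s ^ 2)
      (fun s _ => by
        have := (hv.differentiable one_ne_zero s).hasDerivAt.fun_pow 2
        simpa only [Nat.cast_ofNat, Nat.add_one_sub_one, pow_one, mul_assoc] using this)
      (hcont.intervalIntegrable 0 1), hw0, hw1]
    ring
  have hsplit : ∀ r ∈ uIcc (0:ℝ) 1, (deriv (deriv w) r + deriv w r / r) ^ 2 * r
      = (deriv (deriv w) r * deriv (deriv w) r + deriv w r * deriv w r / r ^ 2) * r
        + 2 * (deriv w r * deriv (deriv w) r) := by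
    intro r _
    rcases eq_or_ne r 0 with rfl | hr
    · simp [hw0]
    · field_simp; ring
  rw [intervalIntegral.integral_congr hsplit, intervalIntegral.integral_add
    (intervalIntegrable_radialForm hw hw0 hw) (hcont.intervalIntegrable 0 1), hcross, add_zero,
    radialForm]

theorem integral_sq_sub_radialLaplacian (lam : ℝ) (f : ℝ → ℝ) (hp : ContDiff ℝ 2 p)
    (hq : ContDiff ℝ 2 q) (hp0 : deriv p 0 = 0) (hq0 : deriv q 0 = 0) (hp1 : deriv p 1 = 0)
    (hq1 : deriv q 1 = 0) :
    ∫ r in (0:ℝ)..1, ((deriv (deriv p) r + deriv p r / r)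
        - (deriv (deriv q) r + deriv q r / r)) ^ 2 * r
      = Jpair lam f p (fun r => p r - q r) - Jpair lam f q (fun r => p r - q r)
        - (1 / 2) * ∫ r in (0:ℝ)..1, (deriv p r ^ 2 - deriv q r ^ 2) * (deriv p r - deriv q r) := by
  have hw : ContDiff ℝ 2 (fun r => p r - q r) := hp.sub hq
  have hw' := hp.deriv_sub hq two_ne_zero
  have hw'' := hp.deriv'.deriv_sub hq.deriv' one_ne_zero
  have hw0 : deriv (fun r => p r - q r) 0 = 0 := by simp [hw', hp0, hq0]
  have hw1 : deriv (fun r => p r - q r) 1 = 0 := by simp [hw', hp1, hq1]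
  have hcubic : (∫ r in (0:ℝ)..1, deriv p r ^ 2 * deriv (fun r => p r - q r) r)
      - ∫ r in (0:ℝ)..1, deriv q r ^ 2 * deriv (fun r => p r - q r) r
      = ∫ r in (0:ℝ)..1, (deriv p r ^ 2 - deriv q r ^ 2) * (deriv p r - deriv q r) := by
    have hp' : Continuous (deriv p) := hp.continuous_deriv one_le_two
    have hq' : Continuous (deriv q) := hq.continuous_deriv one_le_two
    have hpc : Continuous fun r => deriv p r ^ 2 * (deriv p r - deriv q r) := by fun_prop
    have hqc : Continuous fun r => deriv q r ^ 2 * (deriv p r - deriv q r) := by fun_prop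
    simp only [hw']
    rw [← intervalIntegral.integral_sub (hpc.intervalIntegrable 0 1)
      (hqc.intervalIntegrable 0 1)]
    congr 1
    ext r
    ring
  have hlap := integral_sq_radialLaplacian hw hw0 hw1
  rw [hw', hw'', radialForm_sub_left hp hq hp0 hq0 hw] at hlap
  calc _ = ∫ r in (0:ℝ)..1, ((deriv (deriv p) r - deriv (deriv q) r)
        + (deriv p r - deriv q r) / r) ^ 2 * r := by
        congr 1; ext r; ring
    _ = _ := hlap
    _ = _ := by rw [Jpair_eq_radialForm, Jpair_eq_radialForm, ← hcubic]; ring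

end Identity

theorem W22normSq_const_mul (c : ℝ) (φ : ℝ → ℝ) :
    W22normSq (fun r => c * φ r) = c ^ 2 * W22normSq φ := by
  simp only [W22normSq, deriv_const_mul_field']
  rw [← intervalIntegral.integral_const_mul]
  congr 1
  ext r
  ring

theorem Jpair_const_mul (lam c : ℝ) (f u φ : ℝ → ℝ) :
    Jpair lam f u (fun r => c * φ r) = c * Jpair lam f u φ := by
  simp only [Jpair, deriv_const_mul_field']
  have h₁ : ∫ r in (0:ℝ)..1, (deriv (deriv u) r * (c * deriv (deriv φ) r)
        + deriv u r * (c * deriv φ r) / r ^ 2) * r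
      = c * ∫ r in (0:ℝ)..1, (deriv (deriv u) r * deriv (deriv φ) r
        + deriv u r * deriv φ r / r ^ 2) * r := by
    rw [← intervalIntegral.integral_const_mul]; congr 1; ext r; ring
  have h₂ : ∫ r in (0:ℝ)..1, deriv u r ^ 2 * (c * deriv φ r)
      = c * ∫ r in (0:ℝ)..1, deriv u r ^ 2 * deriv φ r := by
    rw [← intervalIntegral.integral_const_mul]; congr 1; ext r; ring
  have h₃ : ∫ r in (0:ℝ)..1, f r * (c * φ r) * r = c * ∫ r in (0:ℝ)..1, f r * φ r * r := by
    rw [← intervalIntegral.integral_const_mul]; congr 1; ext r; ring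
  rw [h₁, h₂, h₃]
  ring

theorem W22density_sub_le {p q : ℝ → ℝ} (hp : ContDiff ℝ 2 p) (hq : ContDiff ℝ 2 q) {r : ℝ}
    (hr : 0 ≤ r) :
    W22density (fun s => p s - q s) r ≤ 2 * (W22density p r + W22density q r) := by
  rw [W22density, hp.deriv_sub hq two_ne_zero,
    hp.deriv'.deriv_sub hq.deriv' one_ne_zero]
  have hgap : 2 * (W22density p r + W22density q r)
      - ((p r - q r) ^ 2 + (deriv p r - deriv q r) ^ 2 / r ^ 2
        + (deriv (deriv p) r - deriv (deriv q) r) ^ 2) * r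
      = ((p r + q r) ^ 2 + (deriv p r + deriv q r) ^ 2 / r ^ 2
        + (deriv (deriv p) r + deriv (deriv q) r) ^ 2) * r := by
    simp only [W22density]; ring
  have : 0 ≤ ((p r + q r) ^ 2 + (deriv p r + deriv q r) ^ 2 / r ^ 2
      + (deriv (deriv p) r + deriv (deriv q) r) ^ 2) * r := by positivity
  linarith

theorem W22normSq_sub_le {p q : ℝ → ℝ} (hp : ContDiff ℝ 2 p) (hq : ContDiff ℝ 2 q)
    (hp0 : deriv p 0 = 0) (hq0 : deriv q 0 = 0) :
    W22normSq (fun r => p r - q r) ≤ 2 * (W22normSq p + W22normSq q) := by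
  have hIp := intervalIntegrable_W22density hp hp0 0 1
  have hIq := intervalIntegrable_W22density hq hq0 0 1
  have hw0 : deriv (fun r => p r - q r) 0 = 0 := by
    simp [hp.deriv_sub hq two_ne_zero, hp0, hq0]
  calc W22normSq (fun r => p r - q r) = ∫ r in (0:ℝ)..1, W22density (fun s => p s - q s) r := rfl
    _ ≤ ∫ r in (0:ℝ)..1, 2 * (W22density p r + W22density q r) :=
      intervalIntegral.integral_mono_on zero_le_one
        (intervalIntegrable_W22density (hp.sub hq) hw0 0 1) ((hIp.add hIq).const_mul 2)
        fun r hr => W22density_sub_le hp hq hr.1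
    _ = 2 * (W22normSq p + W22normSq q) := by
      rw [intervalIntegral.integral_const_mul, intervalIntegral.integral_add hIp hIq]; rfl

theorem abs_integral_sq_sub_sq_mul_sub_le {a b : ℝ → ℝ} {K x y : ℝ} (hxy : x ≤ y)
    (ha : Continuous a) (hb : Continuous b) (haK : ∀ r ∈ Icc x y, |a r| ≤ K)
    (hbK : ∀ r ∈ Icc x y, |b r| ≤ K) :
    |∫ r in x..y, (a r ^ 2 - b r ^ 2) * (a r - b r)| ≤ 2 * K * ∫ r in x..y, (a r - b r) ^ 2 := by
  refine (intervalIntegral.abs_integral_le_integral_abs hxy).trans ?_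
  rw [← intervalIntegral.integral_const_mul]
  refine intervalIntegral.integral_mono_on hxy
    ((by fun_prop : Continuous fun r => |(a r ^ 2 - b r ^ 2) * (a r - b r)|).intervalIntegrable x y)
    ((by fun_prop : Continuous fun r => 2 * K * (a r - b r) ^ 2).intervalIntegrable x y)
    fun r hr => ?_
  rw [show (a r ^ 2 - b r ^ 2) * (a r - b r) = (a r + b r) * (a r - b r) ^ 2 by ring, abs_mul,
    abs_of_nonneg (sq_nonneg (a r - b r))]
  exact mul_le_mul_of_nonneg_right
    ((abs_add_le _ _).trans (by linarith [haK r hr, hbK r hr])) (sq_nonneg _)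

theorem tendsto_integral_sq_sub_sq_mul_sub_deriv {u : ℕ → ℝ → ℝ} {B : ℝ}
    (hu : ∀ n, ContDiff ℝ 2 (u n)) (hu0 : ∀ n, deriv (u n) 0 = 0)
    (hu1 : ∀ n, deriv (u n) 1 = 0) (hB : ∀ n, W22normSq (u n) ≤ B) {ι : Type*} {l : Filter ι}
    {a b : ι → ℕ}
    (h : Tendsto (fun i => ∫ r in (0:ℝ)..1, (deriv (u (a i)) r - deriv (u (b i)) r) ^ 2) l (𝓝 0)) :
    Tendsto (fun i => ∫ r in (0:ℝ)..1, (deriv (u (a i)) r ^ 2 - deriv (u (b i)) r ^ 2)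
      * (deriv (u (a i)) r - deriv (u (b i)) r)) l (𝓝 0) :=
  squeeze_zero_norm (fun i => abs_integral_sq_sub_sq_mul_sub_le zero_le_one
      ((hu _).continuous_deriv one_le_two) ((hu _).continuous_deriv one_le_two)
      (fun _ => abs_deriv_le_sqrt (hu _) (hu0 _) (hu1 _) (hB _))
      (fun _ => abs_deriv_le_sqrt (hu _) (hu0 _) (hu1 _) (hB _)))
    (by simpa using h.const_mul (2 * √B))

section PalaisSmale

variable {lam : ℝ} {f : ℝ → ℝ}

theorem abs_Jpair_le_of_forall_W22normSq_le_one {u w : ℝ → ℝ} {ε : ℝ}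
    (hε : ∀ φ : ℝ → ℝ, ContDiff ℝ (⊤ : ℕ∞) φ → deriv φ 0 = 0 → φ 1 = 0 → deriv φ 1 = 0 →
      W22normSq φ ≤ 1 → |Jpair lam f u φ| ≤ ε)
    (hw : ContDiff ℝ (⊤ : ℕ∞) w) (hw0 : deriv w 0 = 0) (hw1 : w 1 = 0) (hw1' : deriv w 1 = 0)
    {c : ℝ} (hc : 0 < c) (hwc : W22normSq w ≤ c ^ 2) : |Jpair lam f u w| ≤ c * ε := by
  have hscaled := hε (fun r => c⁻¹ * w r) (contDiff_const.mul hw)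
    (by simp [deriv_const_mul_field', hw0]) (by simp [hw1]) (by simp [deriv_const_mul_field', hw1'])
    (by
      rw [W22normSq_const_mul]
      calc c⁻¹ ^ 2 * W22normSq w ≤ c⁻¹ ^ 2 * c ^ 2 := by gcongr
        _ = 1 := by field_simp)
  rwa [Jpair_const_mul, abs_mul, abs_inv, abs_of_pos hc, inv_mul_le_iff₀ hc] at hscaled

theorem tendsto_Jpair_of_forall_W22normSq_le_one {u : ℕ → ℝ → ℝ}
    (hPS : ∀ ε > (0:ℝ), ∃ N : ℕ, ∀ n ≥ N, ∀ φ : ℝ → ℝ,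
      ContDiff ℝ (⊤ : ℕ∞) φ → deriv φ 0 = 0 → φ 1 = 0 → deriv φ 1 = 0 →
      W22normSq φ ≤ 1 → |Jpair lam f (u n) φ| ≤ ε)
    {ι : Type*} {l : Filter ι} {n : ι → ℕ} (hn : Tendsto n l atTop) {w : ι → ℝ → ℝ}
    (hw : ∀ i, ContDiff ℝ (⊤ : ℕ∞) (w i)) (hw0 : ∀ i, deriv (w i) 0 = 0) (hw1 : ∀ i, w i 1 = 0)
    (hw1' : ∀ i, deriv (w i) 1 = 0) {C : ℝ} (hC : ∀ i, W22normSq (w i) ≤ C) :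
    Tendsto (fun i => Jpair lam f (u (n i)) (w i)) l (𝓝 0) := by
  rw [Metric.tendsto_nhds]
  intro ε hε
  set c := max C 1
  have hc : 0 < c := zero_lt_one.trans_le (le_max_right C 1)
  have hCc : C ≤ c ^ 2 := by nlinarith [le_max_left C 1, le_max_right C 1]
  obtain ⟨N, hN⟩ := hPS (ε / (2 * c)) (by positivity)
  filter_upwards [hn.eventually_ge_atTop N] with i hi
  rw [Real.dist_eq, sub_zero]
  calc |Jpair lam f (u (n i)) (w i)| ≤ c * (ε / (2 * c)) :=
        abs_Jpair_le_of_forall_W22normSq_le_one (hN (n i) hi) (hw i) (hw0 i) (hw1 i) (hw1' i) hc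
          ((hC i).trans hCc)
    _ < ε := by field_simp; linarith

theorem tendsto_Jpair_sub {u : ℕ → ℝ → ℝ} {B : ℝ} (hsm : ∀ n, ContDiff ℝ (⊤ : ℕ∞) (u n))
    (hbc : ∀ n, deriv (u n) 0 = 0 ∧ u n 1 = 0 ∧ deriv (u n) 1 = 0)
    (hB : ∀ n, W22normSq (u n) ≤ B)
    (hPS : ∀ ε > (0:ℝ), ∃ N : ℕ, ∀ n ≥ N, ∀ φ : ℝ → ℝ,
      ContDiff ℝ (⊤ : ℕ∞) φ → deriv φ 0 = 0 → φ 1 = 0 → deriv φ 1 = 0 →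
      W22normSq φ ≤ 1 → |Jpair lam f (u n) φ| ≤ ε)
    {ι : Type*} {l : Filter ι} {a b k : ι → ℕ} (hk : Tendsto k l atTop) :
    Tendsto (fun i => Jpair lam f (u (k i)) fun r => u (a i) r - u (b i) r) l (𝓝 0) := by
  have hu (n : ℕ) : ContDiff ℝ 2 (u n) := (hsm n).of_le (WithTop.coe_le_coe.mpr le_top)
  have hdiff (m n : ℕ) :
      deriv (fun r => u m r - u n r) = fun r => deriv (u m) r - deriv (u n) r :=
    (hu m).deriv_sub (hu n) two_ne_zero
  exact tendsto_Jpair_of_forall_W22normSq_le_one hPS hk (fun _ => (hsm _).sub (hsm _))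
    (fun _ => by simp [hdiff, (hbc _).1]) (fun _ => by simp [(hbc _).2.1])
    (fun _ => by simp [hdiff, (hbc _).2.2]) (C := 4 * B)
    fun i => (W22normSq_sub_le (hu _) (hu _) (hbc _).1 (hbc _).1).trans
      (by linarith [hB (a i), hB (b i)])

end PalaisSmale

theorem stmt9_general (lam : ℝ) (f : ℝ → ℝ)
    (u : ℕ → ℝ → ℝ) (hsm : ∀ n, ContDiff ℝ (⊤ : ℕ∞) (u n))
    (hbc : ∀ n, deriv (u n) 0 = 0 ∧ u n 1 = 0 ∧ deriv (u n) 1 = 0)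
    (hbdd : ∃ B : ℝ, ∀ n, W22normSq (u n) ≤ B)
    (hPS2 : ∀ ε > (0:ℝ), ∃ N : ℕ, ∀ n ≥ N, ∀ φ : ℝ → ℝ,
      ContDiff ℝ (⊤ : ℕ∞) φ → deriv φ 0 = 0 → φ 1 = 0 → deriv φ 1 = 0 →
      W22normSq φ ≤ 1 → |Jpair lam f (u n) φ| ≤ ε) :
    ∃ ns : ℕ → ℕ, StrictMono ns ∧
      ∀ ε > (0:ℝ), ∃ N : ℕ, ∀ m ≥ N, ∀ n ≥ N,
        Real.sqrt (∫ r in (0:ℝ)..1,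
          ((deriv (deriv (u (ns m))) r + deriv (u (ns m)) r / r)
            - (deriv (deriv (u (ns n))) r + deriv (u (ns n)) r / r)) ^ 2 * r) < ε := by
  obtain ⟨B, hB⟩ := hbdd
  have hu (n : ℕ) : ContDiff ℝ 2 (u n) := (hsm n).of_le (WithTop.coe_le_coe.mpr le_top)
  have hu0 (n : ℕ) := (hbc n).1
  have hu1 (n : ℕ) := (hbc n).2.2
  obtain ⟨ns, hns, hL2⟩ := exists_strictMono_tendsto_integral_sq_sub_deriv hu hu0 hu1 hB
  refine ⟨ns, hns, ?_⟩
  have hJ {k : ℕ × ℕ → ℕ} (hk : Tendsto k atTop atTop) :=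
    tendsto_Jpair_sub hsm hbc hB hPS2 (a := fun p => ns p.1) (b := fun p => ns p.2)
      (hns.tendsto_atTop.comp hk)
  have hQ := ((hJ (tendsto_fst.mono_left prod_atTop_atTop_eq.ge)).sub
    (hJ (tendsto_snd.mono_left prod_atTop_atTop_eq.ge))).sub
    ((tendsto_integral_sq_sub_sq_mul_sub_deriv hu hu0 hu1 hB hL2).const_mul (1 / 2))
  simp only [sub_zero, mul_zero] at hQ
  intro ε hε
  obtain ⟨N, hN⟩ := eventually_atTop_prod_self'.mp
    (((Real.continuous_sqrt.tendsto' 0 0 Real.sqrt_zero).comp hQ).eventually (gt_mem_nhds hε))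
  refine ⟨N, fun m hm n hn => ?_⟩
  rw [integral_sq_sub_radialLaplacian lam f (hu _) (hu _) (hu0 _) (hu0 _) (hu1 _) (hu1 _)]
  exact hN m hm n hn

/-- Every bounded Palais–Smale sequence for `J_λ` (Dirichlet boundary conditions)
admits a subsequence which is Cauchy in the `L²(r dr)` norm of the radial Laplacian. -/
theorem stmt9 (lam : ℝ) (hlam : 0 ≤ lam) (f : ℝ → ℝ)
    (hf_int : IntegrableOn (fun r => f r * r) (Ioc 0 1) volume) (L : ℝ)
    (u : ℕ → ℝ → ℝ) (hsm : ∀ n, ContDiff ℝ (⊤ : ℕ∞) (u n))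
    (hbc : ∀ n, deriv (u n) 0 = 0 ∧ u n 1 = 0 ∧ deriv (u n) 1 = 0)
    (hbdd : ∃ B : ℝ, ∀ n, W22normSq (u n) ≤ B)
    (hPS1 : Tendsto (fun n => Jfun lam f (u n)) atTop (nhds L))
    (hPS2 : ∀ ε > (0:ℝ), ∃ N : ℕ, ∀ n ≥ N, ∀ φ : ℝ → ℝ,
      ContDiff ℝ (⊤ : ℕ∞) φ → deriv φ 0 = 0 → φ 1 = 0 → deriv φ 1 = 0 →
      W22normSq φ ≤ 1 → |Jpair lam f (u n) φ| ≤ ε) :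
    ∃ ns : ℕ → ℕ, StrictMono ns ∧
      ∀ ε > (0:ℝ), ∃ N : ℕ, ∀ m ≥ N, ∀ n ≥ N,
        Real.sqrt (∫ r in (0:ℝ)..1,
          ((deriv (deriv (u (ns m))) r + deriv (u (ns m)) r / r)
            - (deriv (deriv (u (ns n))) r + deriv (u (ns n)) r / r)) ^ 2 * r) < ε :=
  stmt9_general lam f u hsm hbc hbdd hPS2
end
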